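/- arXiv:1909.00301 — 4 statements merged into one kernel-verified Lean document; each statement's English description precedes it below -/
import Mathlib

section
/- For the chain CRF forward recursion, the sum of the final forward variables equals the partition function: if α⁰(y) = 1 for all labels y and αᵗ(y) = Σ_{y'} αᵗ⁻¹(y') · exp(s(t, y, y')) for t = 1,...,T, then Σ_y α^T(y) = Σ over all label sequences (y⁰,...,y^T) of exp(Σ_{t=1}^T s(t, yᵗ, yᵗ⁻¹)). -/
private lemma sum_snoc_aux {K M : Type*} [Fintype K] [AddCommMonoid M]
    {n : ℕ} (f : (Fin (n+1) → K) → M) :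
    ∑ g : Fin (n+1) → K, f g = ∑ p : (Fin n → K) × K, f (Fin.snoc p.1 p.2) := by
  refine (Fintype.sum_bijective (fun p : (Fin n → K) × K => (Fin.snoc p.1 p.2 : Fin (n+1) → K))
    ⟨?_, ?_⟩ _ f (fun p => rfl)).symm
  · rintro ⟨g₁, y₁⟩ ⟨g₂, y₂⟩ h
    have h1 : g₁ = g₂ := by
      funext i; have := congrFun h i.castSucc; simpa using this
    have h2 : y₁ = y₂ := by simpa using congrFun h (Fin.last n)
    simp [h1, h2]
  · intro g
    exact ⟨(Fin.init g, g (Fin.last n)), Fin.snoc_init_self g⟩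

private lemma key {K : Type*} [Fintype K] [DecidableEq K] {T : ℕ}
    (s : Fin T → K → K → ℝ) (α : Fin (T + 1) → K → ℝ)
    (hα0 : ∀ y : K, α 0 y = 1)
    (hα : ∀ (t : Fin T) (y : K),
      α t.succ y = ∑ y' : K, α t.castSucc y' * Real.exp (s t y y')) :
    ∀ n (hn : n ≤ T) (y : K),
      α ⟨n, Nat.lt_succ_of_le hn⟩ y =
        ∑ g : Fin n → K, Real.exp (∑ i : Fin n,
          s (Fin.castLE hn i) ((Fin.snoc g y : Fin (n+1) → K) i.succ)
            ((Fin.snoc g y : Fin (n+1) → K) i.castSucc)) := by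
  intro n
  induction n with
  | zero => intro hn y; simpa using hα0 y
  | succ n ih =>
    intro hn y
    have hlt : n < T := hn
    have hn' : n ≤ T := Nat.le_of_succ_le hn
    have h1 : (⟨n+1, Nat.lt_succ_of_le hn⟩ : Fin (T+1)) = (⟨n, hlt⟩ : Fin T).succ := rfl
    rw [h1, hα]
    rw [sum_snoc_aux, Fintype.sum_prod_type, Finset.sum_comm]
    refine Finset.sum_congr rfl fun y' _ => ?_
    have h2 : (Fin.castSucc ⟨n, hlt⟩ : Fin (T+1)) = ⟨n, Nat.lt_succ_of_le hn'⟩ := rfl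
    rw [h2, ih hn' y', Finset.sum_mul]
    refine Finset.sum_congr rfl fun g _ => ?_
    rw [Fin.sum_univ_castSucc, Real.exp_add]
    congr 1
    · congr 1
      refine Finset.sum_congr rfl fun i _ => ?_
      have e1 : Fin.castLE hn i.castSucc = Fin.castLE hn' i := rfl
      have e2 : (Fin.snoc (Fin.snoc g y' : Fin (n+1) → K) y : Fin (n+2) → K) i.castSucc.succ
          = (Fin.snoc g y' : Fin (n+1) → K) i.succ := by
        rw [Fin.succ_castSucc, Fin.snoc_castSucc]
      have e3 : (Fin.snoc (Fin.snoc g y' : Fin (n+1) → K) y : Fin (n+2) → K) i.castSucc.castSucc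
          = (Fin.snoc g y' : Fin (n+1) → K) i.castSucc := by
        rw [Fin.snoc_castSucc]
      rw [e1, e2, e3]
    · congr 1
      have e1 : Fin.castLE hn (Fin.last n) = (⟨n, hlt⟩ : Fin T) := rfl
      have e2 : (Fin.snoc (Fin.snoc g y' : Fin (n+1) → K) y : Fin (n+2) → K) (Fin.last n).succ
          = y := by
        rw [Fin.succ_last, Fin.snoc_last]
      have e3 : (Fin.snoc (Fin.snoc g y' : Fin (n+1) → K) y : Fin (n+2) → K) (Fin.last n).castSucc
          = y' := by
        rw [Fin.snoc_castSucc, Fin.snoc_last]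
      rw [e1, e2, e3]

/-- The chain CRF forward recursion computes the partition function. -/
theorem forward_computes_partition
    {K : Type*} [Fintype K] [DecidableEq K] [Nonempty K] (T : ℕ)
    (s : Fin T → K → K → ℝ)
    (α : Fin (T + 1) → K → ℝ)
    (hα0 : ∀ y : K, α 0 y = 1)
    (hα : ∀ (t : Fin T) (y : K),
      α t.succ y = ∑ y' : K, α t.castSucc y' * Real.exp (s t y y')) :
    ∑ y : K, α (Fin.last T) y =
      ∑ y : Fin (T + 1) → K,
        Real.exp (∑ t : Fin T, s t (y t.succ) (y t.castSucc)) := by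
  cases T with
  | zero =>
    simp [hα0]
  | succ T =>
    rw [sum_snoc_aux, Fintype.sum_prod_type, Finset.sum_comm]
    refine Finset.sum_congr rfl fun y _ => ?_
    have h1 : (Fin.last (T+1)) = (⟨T+1, Nat.lt_succ_of_le le_rfl⟩ : Fin (T+2)) := rfl
    rw [h1, key s α hα0 hα (T+1) le_rfl y]
    refine Finset.sum_congr rfl fun g _ => ?_
    congr 1
end

section
/- The backward variables are the partial derivatives of the partition function with respect to the forward variables: with βᵀ(y) = 1 and βᵗ⁻¹(y') = Σ_y βᵗ(y)·exp(s(t, y, y')), and viewing Z as the function of the vector (αᵗ(y))_y given by propagating the forward recursion from time t onward and summing at time T, we have ∂Z/∂αᵗ(y) = βᵗ(y) for all t and y. -/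
/-- The backward variables are the partial derivatives of the
partition function with respect to the forward variables:
`Z`, viewed as a function of the time-`t₀` forward vector `v` (obtained by
propagating the forward recursion from time `t₀` onward and summing at time
`T`), is the linear functional `v ↦ ∑ y, v y * β t₀ y`; hence
`∂Z/∂αᵗ⁰(y) = βᵗ⁰(y)`. -/
theorem partition_linear_in_forward_with_backward_coeffs
    {K : Type*} [Fintype K] [DecidableEq K] [Nonempty K] (T : ℕ)
    (s : Fin T → K → K → ℝ)
    (β : Fin (T + 1) → K → ℝ)
    (hβT : ∀ y : K, β (Fin.last T) y = 1)
    (hβ : ∀ (t : Fin T) (y' : K),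
      β t.castSucc y' = ∑ y : K, β t.succ y * Real.exp (s t y y'))
    (t₀ : Fin (T + 1)) (v : K → ℝ)
    (α' : Fin (T + 1) → K → ℝ)
    (hstart : ∀ y : K, α' t₀ y = v y)
    (hrec : ∀ (u : Fin T), (t₀ : ℕ) ≤ (u : ℕ) → ∀ y : K,
      α' u.succ y = ∑ y' : K, α' u.castSucc y' * Real.exp (s u y y')) :
    ∑ y : K, α' (Fin.last T) y = ∑ y : K, v y * β t₀ y := by
  have key : ∀ n : ℕ, (hn : n ≤ T) → (ht : (t₀ : ℕ) ≤ n) →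
      ∑ y : K, α' ⟨n, by omega⟩ y * β ⟨n, by omega⟩ y = ∑ y : K, v y * β t₀ y := by
    intro n
    induction n with
    | zero =>
      intro hn ht
      have h0 : (⟨0, by omega⟩ : Fin (T + 1)) = t₀ := Fin.ext (by simp only [Fin.val_mk]; omega)
      rw [h0]
      simp only [hstart]
    | succ m ih =>
      intro hn ht
      rcases Nat.lt_or_ge (t₀ : ℕ) (m + 1) with h | h
      · -- t₀ ≤ m, use recursion
        have hm : (t₀ : ℕ) ≤ m := by omega
        have hmT : m ≤ T := by omega
        set u : Fin T := ⟨m, by omega⟩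
        have hsucc : (⟨m + 1, by omega⟩ : Fin (T + 1)) = u.succ := rfl
        have hcast : (⟨m, by omega⟩ : Fin (T + 1)) = u.castSucc := rfl
        rw [← ih hmT hm]
        calc ∑ y : K, α' ⟨m + 1, by omega⟩ y * β ⟨m + 1, by omega⟩ y
            = ∑ y : K, (∑ y' : K, α' u.castSucc y' * Real.exp (s u y y')) * β u.succ y := by
              refine Finset.sum_congr rfl fun y _ => ?_
              rw [hsucc, hrec u hm y]
          _ = ∑ y' : K, α' u.castSucc y' * ∑ y : K, β u.succ y * Real.exp (s u y y') := by
              simp only [Finset.sum_mul, Finset.mul_sum]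
              rw [Finset.sum_comm]
              exact Finset.sum_congr rfl fun y' _ =>
                Finset.sum_congr rfl fun y _ => by ring
          _ = ∑ y' : K, α' ⟨m, by omega⟩ y' * β ⟨m, by omega⟩ y' := by
              refine Finset.sum_congr rfl fun y' _ => ?_
              rw [← hβ u y', hcast]
      · -- t₀ = m + 1
        have h1 : (⟨m + 1, by omega⟩ : Fin (T + 1)) = t₀ := Fin.ext (by simp only [Fin.val_mk]; omega)
        rw [h1]
        simp only [hstart]
  have := key T le_rfl (by omega)
  simp only [show (⟨T, by omega⟩ : Fin (T + 1)) = Fin.last T from rfl, hβT, mul_one] at this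
  exact this
end

section
/- The pairwise marginal of the chain CRF distribution admits the forward–backward formula: for any t, a, b, the total probability mass of label sequences y with y(t) = b and y(t+1) = a equals αᵗ(b)·βᵗ⁺¹(a)·exp(s(t, a, b)) / Z. -/
lemma snoc_edge_sum {K : Type*} (T n : ℕ) (hn : n + 1 ≤ T) (hn' : n < T)
    (s : Fin T → K → K → ℝ) (k : K) (u : Fin (n+1) → K) :
    (∑ w : Fin (n+1), s ⟨w.val, by omega⟩
        ((Fin.snoc u k : Fin (n+1+1) → K) w.succ)
        ((Fin.snoc u k : Fin (n+1+1) → K) w.castSucc))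
      = (∑ w : Fin n, s ⟨w.val, by omega⟩ (u w.succ) (u w.castSucc))
        + s ⟨n, hn'⟩ k (u (Fin.last n)) := by
  rw [Fin.sum_univ_castSucc]
  congr 1
  · refine Finset.sum_congr rfl fun w _ => ?_
    rw [Fin.succ_castSucc, Fin.snoc_castSucc, Fin.snoc_castSucc]
    rfl
  · rw [Fin.succ_last, Fin.snoc_last, Fin.snoc_castSucc]
    rfl

set_option maxHeartbeats 1000000 in
lemma crf_forward {K : Type*} [Fintype K] [DecidableEq K] (T : ℕ)
    (s : Fin T → K → K → ℝ)
    (α : Fin (T + 1) → K → ℝ)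
    (hα0 : ∀ y : K, α 0 y = 1)
    (hα : ∀ (u : Fin T) (y : K),
      α u.succ y = ∑ y' : K, α u.castSucc y' * Real.exp (s u y y')) :
    ∀ (n : ℕ) (hn : n ≤ T) (b : K),
      α ⟨n, by omega⟩ b = ∑ u : Fin (n + 1) → K,
        if u (Fin.last n) = b then
          Real.exp (∑ w : Fin n, s ⟨w.val, by omega⟩ (u w.succ) (u w.castSucc)) else 0 := by
  intro n
  induction n with
  | zero =>
    intro hn b
    have h0 : (⟨0, by omega⟩ : Fin (T+1)) = 0 := rfl
    rw [h0, hα0]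
    rw [Fintype.sum_equiv (Equiv.funUnique (Fin 1) K)
      (fun u : Fin 1 → K => if u (Fin.last 0) = b then
          Real.exp (∑ w : Fin 0, s ⟨w.val, by omega⟩ (u w.succ) (u w.castSucc)) else 0)
      (fun k => if k = b then (1:ℝ) else 0) (fun u => by
        simp [Equiv.funUnique])]
    rw [Finset.sum_ite_eq' Finset.univ b (fun _ => (1:ℝ))]
    simp
  | succ n ih =>
    intro hn b
    have hn' : n < T := by omega
    have hstep := hα ⟨n, hn'⟩ b
    have h1 : (⟨n, hn'⟩ : Fin T).succ = ⟨n+1, by omega⟩ := rfl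
    have h2 : (⟨n, hn'⟩ : Fin T).castSucc = ⟨n, by omega⟩ := rfl
    rw [h1, h2] at hstep
    rw [hstep]
    have hmid : ∀ b' : K, α ⟨n, by omega⟩ b' = ∑ u : Fin (n + 1) → K,
        if u (Fin.last n) = b' then
          Real.exp (∑ w : Fin n, s ⟨w.val, by omega⟩ (u w.succ) (u w.castSucc)) else 0 :=
      fun b' => ih (by omega) b'
    calc ∑ b' : K, α ⟨n, by omega⟩ b' * Real.exp (s ⟨n, hn'⟩ b b')
        = ∑ b' : K, ∑ u : Fin (n + 1) → K,
            (if u (Fin.last n) = b' then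
              Real.exp (∑ w : Fin n, s ⟨w.val, by omega⟩ (u w.succ) (u w.castSucc)) else 0)
              * Real.exp (s ⟨n, hn'⟩ b b') := by
          refine Finset.sum_congr rfl fun b' _ => ?_
          rw [hmid b', Finset.sum_mul]
      _ = ∑ u : Fin (n + 1) → K,
            Real.exp (∑ w : Fin n, s ⟨w.val, by omega⟩ (u w.succ) (u w.castSucc))
              * Real.exp (s ⟨n, hn'⟩ b (u (Fin.last n))) := by
          rw [Finset.sum_comm]
          refine Finset.sum_congr rfl fun u _ => ?_
          have key : ∀ b' : K,
              (if u (Fin.last n) = b' then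
                Real.exp (∑ w : Fin n, s ⟨w.val, by omega⟩ (u w.succ) (u w.castSucc)) else 0)
                * Real.exp (s ⟨n, hn'⟩ b b')
              = if u (Fin.last n) = b' then
                  Real.exp (∑ w : Fin n, s ⟨w.val, by omega⟩ (u w.succ) (u w.castSucc))
                    * Real.exp (s ⟨n, hn'⟩ b (u (Fin.last n))) else 0 := by
            intro b'
            by_cases h : u (Fin.last n) = b'
            · subst h; simp
            · simp [h]
          rw [Finset.sum_congr rfl (fun b' _ => key b'),
            Finset.sum_ite_eq Finset.univ (u (Fin.last n))]
          simp
      _ = ∑ p : K × (Fin (n + 1) → K),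
            if p.1 = b then
              Real.exp (∑ w : Fin n, s ⟨w.val, by omega⟩ (p.2 w.succ) (p.2 w.castSucc)
                + s ⟨n, hn'⟩ p.1 (p.2 (Fin.last n))) else 0 := by
          rw [Fintype.sum_prod_type, Finset.sum_comm]
          refine Finset.sum_congr rfl fun u _ => ?_
          rw [Finset.sum_ite_eq' Finset.univ b]
          simp [Real.exp_add]
      _ = ∑ u : Fin (n + 1 + 1) → K,
            if u (Fin.last (n+1)) = b then
              Real.exp (∑ w : Fin (n+1), s ⟨w.val, by omega⟩ (u w.succ) (u w.castSucc)) else 0 := by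
          refine Fintype.sum_equiv (Fin.snocEquiv (fun _ => K)) _ _ fun p => ?_
          rcases p with ⟨k, u⟩
          have he : ((Fin.snocEquiv (fun _ => K)) (k, u) : Fin (n+1+1) → K)
              = (Fin.snoc u k : Fin (n+1+1) → K) := rfl
          rw [he, Fin.snoc_last]
          rw [snoc_edge_sum T n hn hn' s k u]


lemma sum_fin_split {M : Type*} [AddCommMonoid M] (T t0 m : ℕ) (hT : T = t0 + m + 1)
    (f : Fin T → M) :
    ∑ u : Fin T, f u
      = (∑ w : Fin t0, f ⟨w.val, by omega⟩) + f ⟨t0, by omega⟩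
        + ∑ w : Fin m, f ⟨t0 + 1 + w.val, by omega⟩ := by
  subst hT
  refine Eq.trans (Fin.sum_univ_add (a := t0) (b := m + 1) (f := f)) ?_
  rw [Fin.sum_univ_succ, ← add_assoc]
  refine congrArg₂ (· + ·) (congrArg₂ (· + ·) ?_ ?_) ?_
  · exact Finset.sum_congr rfl fun w _ => rfl
  · rfl
  · refine Finset.sum_congr rfl fun w _ => ?_
    exact congrArg f (Fin.ext (by simp [Fin.val_succ]; omega))

def crfGlue {K : Type*} (T t0 m : ℕ) (hT : T = t0 + m + 1)
    (p : (Fin (t0 + 1) → K) × (Fin (m + 1) → K)) : Fin (T + 1) → K :=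
  fun i => if h : i.val ≤ t0 then p.1 ⟨i.val, by omega⟩ else p.2 ⟨i.val - (t0 + 1), by omega⟩

lemma crfGlue_le {K : Type*} (T t0 m : ℕ) (hT : T = t0 + m + 1)
    (p : (Fin (t0 + 1) → K) × (Fin (m + 1) → K)) (i : Fin (T + 1)) (h : i.val ≤ t0) :
    crfGlue T t0 m hT p i = p.1 ⟨i.val, by omega⟩ := dif_pos h

lemma crfGlue_gt {K : Type*} (T t0 m : ℕ) (hT : T = t0 + m + 1)
    (p : (Fin (t0 + 1) → K) × (Fin (m + 1) → K)) (i : Fin (T + 1)) (h : t0 < i.val) :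
    crfGlue T t0 m hT p i = p.2 ⟨i.val - (t0 + 1), by omega⟩ := dif_neg (by omega)

def crfSplitEquiv {K : Type*} (T t0 m : ℕ) (hT : T = t0 + m + 1) :
    ((Fin (t0 + 1) → K) × (Fin (m + 1) → K)) ≃ (Fin (T + 1) → K) where
  toFun := crfGlue T t0 m hT
  invFun y := (fun j => y ⟨j.val, by omega⟩, fun j => y ⟨t0 + 1 + j.val, by omega⟩)
  left_inv p := by
    apply Prod.ext
    · funext j
      show crfGlue T t0 m hT p ⟨j.val, by omega⟩ = p.1 j
      rw [crfGlue_le T t0 m hT p _ (by simpa using Nat.lt_succ_iff.mp j.isLt)]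
    · funext j
      show crfGlue T t0 m hT p ⟨t0 + 1 + j.val, by omega⟩ = p.2 j
      rw [crfGlue_gt T t0 m hT p _ (by simp; omega)]
      exact congrArg p.2 (Fin.ext (by simp))
  right_inv y := by
    funext i
    show crfGlue T t0 m hT _ i = y i
    unfold crfGlue
    split_ifs with h
    · rfl
    · exact congrArg y (Fin.ext (by simp; omega))

lemma glue_edge_sum {K : Type*} (T t0 m : ℕ) (hT : T = t0 + m + 1)
    (s : Fin T → K → K → ℝ) (p : (Fin (t0 + 1) → K) × (Fin (m + 1) → K)) :
    (∑ u : Fin T, s u (crfGlue T t0 m hT p u.succ) (crfGlue T t0 m hT p u.castSucc))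
      = (∑ w : Fin t0, s ⟨w.val, by omega⟩ (p.1 w.succ) (p.1 w.castSucc))
        + s ⟨t0, by omega⟩ (p.2 0) (p.1 (Fin.last t0))
        + ∑ w : Fin m, s ⟨t0 + 1 + w.val, by omega⟩ (p.2 w.succ) (p.2 w.castSucc) := by
  rw [sum_fin_split T t0 m hT]
  refine congrArg₂ (· + ·) (congrArg₂ (· + ·) ?_ ?_) ?_
  · refine Finset.sum_congr rfl fun w _ => ?_
    have hw := w.isLt
    rw [crfGlue_le T t0 m hT p _ (show ((⟨w.val, by omega⟩ : Fin T)).succ.val ≤ t0 by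
        simp only [Fin.val_succ]; omega),
      crfGlue_le T t0 m hT p _ (show ((⟨w.val, by omega⟩ : Fin T)).castSucc.val ≤ t0 by
        simp only [Fin.coe_castSucc]; omega)]
    rfl
  · rw [crfGlue_gt T t0 m hT p _ (show t0 < ((⟨t0, by omega⟩ : Fin T)).succ.val by
        simp [Fin.val_succ]),
      crfGlue_le T t0 m hT p _ (show ((⟨t0, by omega⟩ : Fin T)).castSucc.val ≤ t0 by
        simp only [Fin.coe_castSucc]; omega)]
    refine congrArg₂ (fun x y => s _ x y) ?_ rfl
    exact congrArg p.2 (Fin.ext (by simp only [Fin.val_succ, Fin.coe_castSucc, Fin.val_zero]; omega))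
  · refine Finset.sum_congr rfl fun w _ => ?_
    have hw := w.isLt
    rw [crfGlue_gt T t0 m hT p _ (show t0 < ((⟨t0 + 1 + w.val, by omega⟩ : Fin T)).succ.val by
        simp only [Fin.val_succ]; omega),
      crfGlue_gt T t0 m hT p _ (show t0 < ((⟨t0 + 1 + w.val, by omega⟩ : Fin T)).castSucc.val by
        simp only [Fin.coe_castSucc]; omega)]
    refine congrArg₂ (fun x y => s _ x y) ?_ ?_
    · have hw := w.isLt
      exact congrArg p.2 (Fin.ext (by simp only [Fin.val_succ]; omega))
    · have hw := w.isLt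
      exact congrArg p.2 (Fin.ext (by simp only [Fin.coe_castSucc]; omega))


lemma cons_edge_sum {K : Type*} (T n : ℕ) (hn : n + 1 ≤ T)
    (s : Fin T → K → K → ℝ) (k : K) (v : Fin (n+1) → K) :
    (∑ w : Fin (n+1), s ⟨T - (n+1) + w.val, by omega⟩
        ((Fin.cons k v : Fin (n+1+1) → K) w.succ)
        ((Fin.cons k v : Fin (n+1+1) → K) w.castSucc))
      = s ⟨T - (n+1), by omega⟩ (v 0) k
        + (∑ w : Fin n, s ⟨T - n + w.val, by omega⟩ (v w.succ) (v w.castSucc)) := by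
  rw [Fin.sum_univ_succ]
  simp only [Fin.castSucc_zero, Fin.cons_zero, Fin.cons_succ, ← Fin.succ_castSucc]
  congr 1
  refine Finset.sum_congr rfl fun w _ => ?_
  have hidx : (⟨T - (n+1) + (w.succ.val), by omega⟩ : Fin T)
      = (⟨T - n + w.val, by omega⟩ : Fin T) := by
    apply Fin.ext
    simp [Fin.val_succ]
    omega
  rw [hidx]

lemma crf_backward {K : Type*} [Fintype K] [DecidableEq K] (T : ℕ)
    (s : Fin T → K → K → ℝ)
    (β : Fin (T + 1) → K → ℝ)
    (hβT : ∀ y : K, β (Fin.last T) y = 1)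
    (hβ : ∀ (u : Fin T) (y' : K),
      β u.castSucc y' = ∑ y : K, β u.succ y * Real.exp (s u y y')) :
    ∀ (n : ℕ) (hn : n ≤ T) (a : K),
      β ⟨T - n, by omega⟩ a = ∑ v : Fin (n + 1) → K,
        if v 0 = a then
          Real.exp (∑ w : Fin n, s ⟨T - n + w.val, by omega⟩ (v w.succ) (v w.castSucc)) else 0 := by
  intro n
  induction n with
  | zero =>
    intro hn a
    have h0 : (⟨T - 0, by omega⟩ : Fin (T+1)) = Fin.last T := rfl
    rw [h0, hβT]
    rw [Fintype.sum_equiv (Equiv.funUnique (Fin 1) K)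
      (fun v : Fin 1 → K => if v 0 = a then
          Real.exp (∑ w : Fin 0, s ⟨T - 0 + w.val, by omega⟩ (v w.succ) (v w.castSucc)) else 0)
      (fun k => if k = a then (1:ℝ) else 0) (fun v => by
        simp [Equiv.funUnique])]
    rw [Finset.sum_ite_eq' Finset.univ a (fun _ => (1:ℝ))]
    simp
  | succ n ih =>
    intro hn a
    have hn' : T - (n+1) < T := by omega
    set u₀ : Fin T := ⟨T - (n+1), hn'⟩ with hu₀
    have hstep := hβ u₀ a
    have hcs : u₀.castSucc = (⟨T - (n+1), by omega⟩ : Fin (T+1)) := rfl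
    have hsucc : u₀.succ = (⟨T - n, by omega⟩ : Fin (T+1)) := by
      apply Fin.ext
      simp [hu₀]
      omega
    rw [hcs, hsucc] at hstep
    rw [hstep]
    have hmid : ∀ a' : K, β ⟨T - n, by omega⟩ a' = ∑ v : Fin (n + 1) → K,
        if v 0 = a' then
          Real.exp (∑ w : Fin n, s ⟨T - n + w.val, by omega⟩ (v w.succ) (v w.castSucc)) else 0 :=
      fun a' => ih (by omega) a'
    calc ∑ a' : K, β ⟨T - n, by omega⟩ a' * Real.exp (s u₀ a' a)
        = ∑ a' : K, ∑ v : Fin (n + 1) → K,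
            (if v 0 = a' then
              Real.exp (∑ w : Fin n, s ⟨T - n + w.val, by omega⟩ (v w.succ) (v w.castSucc)) else 0)
              * Real.exp (s u₀ a' a) := by
          refine Finset.sum_congr rfl fun a' _ => ?_
          rw [hmid a', Finset.sum_mul]
      _ = ∑ v : Fin (n + 1) → K,
            Real.exp (∑ w : Fin n, s ⟨T - n + w.val, by omega⟩ (v w.succ) (v w.castSucc))
              * Real.exp (s u₀ (v 0) a) := by
          rw [Finset.sum_comm]
          refine Finset.sum_congr rfl fun v _ => ?_
          have key : ∀ a' : K,
              (if v 0 = a' then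
                Real.exp (∑ w : Fin n, s ⟨T - n + w.val, by omega⟩ (v w.succ) (v w.castSucc)) else 0)
                * Real.exp (s u₀ a' a)
              = if v 0 = a' then
                  Real.exp (∑ w : Fin n, s ⟨T - n + w.val, by omega⟩ (v w.succ) (v w.castSucc))
                    * Real.exp (s u₀ (v 0) a) else 0 := by
            intro a'
            by_cases h : v 0 = a'
            · subst h; simp
            · simp [h]
          rw [Finset.sum_congr rfl (fun a' _ => key a'),
            Finset.sum_ite_eq Finset.univ (v 0)]
          simp
      _ = ∑ p : K × (Fin (n + 1) → K),
            if p.1 = a then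
              Real.exp (s u₀ (p.2 0) p.1
                + ∑ w : Fin n, s ⟨T - n + w.val, by omega⟩ (p.2 w.succ) (p.2 w.castSucc)) else 0 := by
          rw [Fintype.sum_prod_type, Finset.sum_comm]
          refine Finset.sum_congr rfl fun v _ => ?_
          rw [Finset.sum_ite_eq' Finset.univ a]
          simp [Real.exp_add, mul_comm]
      _ = ∑ v : Fin (n + 1 + 1) → K,
            if v 0 = a then
              Real.exp (∑ w : Fin (n+1), s ⟨T - (n+1) + w.val, by omega⟩
                (v w.succ) (v w.castSucc)) else 0 := by
          refine Fintype.sum_equiv (Fin.consEquiv (fun _ => K)) _ _ fun p => ?_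
          rcases p with ⟨k, v⟩
          have he : ((Fin.consEquiv (fun _ => K)) (k, v) : Fin (n+1+1) → K)
              = (Fin.cons k v : Fin (n+1+1) → K) := rfl
          rw [he, Fin.cons_zero, cons_edge_sum T n hn s k v]




lemma sum_prod_factor {A B : Type*} [Fintype A] [Fintype B] (f : A → ℝ) (g : B → ℝ) (c : ℝ) :
    ∑ p : A × B, f p.1 * g p.2 * c = (∑ x : A, f x) * (∑ y : B, g y) * c := by
  rw [Finset.sum_mul_sum, Fintype.sum_prod_type, Finset.sum_mul]
  refine Finset.sum_congr rfl fun x _ => ?_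
  rw [Finset.sum_mul]

set_option maxHeartbeats 2000000 in
lemma crf_split_step {K : Type*} [Fintype K] [DecidableEq K] (T : ℕ)
    (s : Fin T → K → K → ℝ) (t : Fin T) (a b : K) (m : ℕ) (hT : T = t.val + m + 1) :
    (∑ y : Fin (T + 1) → K,
        if y t.castSucc = b ∧ y t.succ = a then
          Real.exp (∑ u : Fin T, s u (y u.succ) (y u.castSucc)) else 0)
      = ∑ p : (Fin (t.val + 1) → K) × (Fin (m + 1) → K),
          (if p.1 (Fin.last t.val) = b then
            Real.exp (∑ w : Fin t.val, s ⟨w.val, by omega⟩ (p.1 w.succ) (p.1 w.castSucc))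
           else 0)
          * (if p.2 0 = a then
            Real.exp (∑ w : Fin m, s ⟨t.val + 1 + w.val, by omega⟩ (p.2 w.succ) (p.2 w.castSucc))
           else 0)
          * Real.exp (s t a b) := by
  refine (Fintype.sum_equiv (crfSplitEquiv T t.val m hT) _ _ fun p => ?_).symm
  rcases p with ⟨u, v⟩
  have he : (crfSplitEquiv T t.val m hT) (u, v) = crfGlue T t.val m hT (u, v) := rfl
  rw [he]
  have hc1 : crfGlue T t.val m hT (u, v) t.castSucc = u (Fin.last t.val) := by
    rw [crfGlue_le T t.val m hT (u, v) t.castSucc (by simp)]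
    rfl
  have hc2 : crfGlue T t.val m hT (u, v) t.succ = v 0 := by
    rw [crfGlue_gt T t.val m hT (u, v) t.succ (by simp [Fin.val_succ])]
    exact congrArg v (Fin.ext (by simp [Fin.val_succ]))
  rw [hc1, hc2, glue_edge_sum T t.val m hT s (u, v)]
  by_cases h1 : u (Fin.last t.val) = b
  · by_cases h2 : v 0 = a
    · subst h1; subst h2
      simp only [if_pos rfl, and_self, if_pos]
      rw [Real.exp_add, Real.exp_add]
      have hts : (⟨t.val, by omega⟩ : Fin T) = t := Fin.ext rfl
      rw [hts]
      ring
    · simp [h1, h2]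
  · simp [h1]

set_option maxHeartbeats 2000000 in
/-- Forward–backward formula for the pairwise marginal of the
chain CRF: the total probability mass of sequences `y` with `y t = b` and
`y (t+1) = a` equals `α t b * β (t+1) a * exp (s t a b) / Z`. -/
theorem pairwise_marginal_forward_backward
    {K : Type*} [Fintype K] [DecidableEq K] [Nonempty K] (T : ℕ)
    (s : Fin T → K → K → ℝ)
    (α : Fin (T + 1) → K → ℝ)
    (hα0 : ∀ y : K, α 0 y = 1)
    (hα : ∀ (u : Fin T) (y : K),
      α u.succ y = ∑ y' : K, α u.castSucc y' * Real.exp (s u y y'))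
    (β : Fin (T + 1) → K → ℝ)
    (hβT : ∀ y : K, β (Fin.last T) y = 1)
    (hβ : ∀ (u : Fin T) (y' : K),
      β u.castSucc y' = ∑ y : K, β u.succ y * Real.exp (s u y y'))
    (Z : ℝ)
    (hZ : Z = ∑ y : Fin (T + 1) → K,
        Real.exp (∑ u : Fin T, s u (y u.succ) (y u.castSucc))) :
    ∀ (t : Fin T) (a b : K),
      (∑ y : Fin (T + 1) → K,
        if y t.castSucc = b ∧ y t.succ = a then
          Real.exp (∑ u : Fin T, s u (y u.succ) (y u.castSucc)) else 0) / Z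
      = α t.castSucc b * β t.succ a * Real.exp (s t a b) / Z := by
  intro t a b
  obtain ⟨m, hT⟩ : ∃ m, T = t.val + m + 1 := ⟨T - t.val - 1, by omega⟩
  congr 1
  have hfwd := crf_forward T s α hα0 hα t.val (by omega) b
  have hbwd := crf_backward T s β hβT hβ m (by omega) a
  have hsucc : (⟨T - m, by omega⟩ : Fin (T+1)) = t.succ := by
    apply Fin.ext
    simp [Fin.val_succ]
    omega
  rw [hsucc] at hbwd
  have hbwd' : β t.succ a = ∑ v : Fin (m + 1) → K,
      if v 0 = a then
        Real.exp (∑ w : Fin m, s ⟨t.val + 1 + w.val, by omega⟩ (v w.succ) (v w.castSucc))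
      else 0 := by
    rw [hbwd]
    refine Finset.sum_congr rfl fun v _ => ?_
    refine if_congr Iff.rfl ?_ rfl
    refine congrArg Real.exp (Finset.sum_congr rfl fun w _ => ?_)
    refine congrArg₂ (fun (i : Fin T) (x : K) => s i (v w.succ) x) ?_ rfl
    apply Fin.ext
    simp
    omega
  calc (∑ y : Fin (T + 1) → K,
        if y t.castSucc = b ∧ y t.succ = a then
          Real.exp (∑ u : Fin T, s u (y u.succ) (y u.castSucc)) else 0)
      = ∑ p : (Fin (t.val + 1) → K) × (Fin (m + 1) → K),
          (if p.1 (Fin.last t.val) = b then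
            Real.exp (∑ w : Fin t.val, s ⟨w.val, by omega⟩ (p.1 w.succ) (p.1 w.castSucc))
           else 0)
          * (if p.2 0 = a then
            Real.exp (∑ w : Fin m, s ⟨t.val + 1 + w.val, by omega⟩ (p.2 w.succ) (p.2 w.castSucc))
           else 0)
          * Real.exp (s t a b) := crf_split_step T s t a b m hT
    _ = (∑ u : Fin (t.val + 1) → K,
          if u (Fin.last t.val) = b then
            Real.exp (∑ w : Fin t.val, s ⟨w.val, by omega⟩ (u w.succ) (u w.castSucc)) else 0)
        * (∑ v : Fin (m + 1) → K,
          if v 0 = a then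
            Real.exp (∑ w : Fin m, s ⟨t.val + 1 + w.val, by omega⟩ (v w.succ) (v w.castSucc)) else 0)
        * Real.exp (s t a b) :=
      sum_prod_factor
        (fun u : Fin (t.val + 1) → K =>
          if u (Fin.last t.val) = b then
            Real.exp (∑ w : Fin t.val, s ⟨w.val, by omega⟩ (u w.succ) (u w.castSucc)) else 0)
        (fun v : Fin (m + 1) → K =>
          if v 0 = a then
            Real.exp (∑ w : Fin m, s ⟨t.val + 1 + w.val, by omega⟩ (v w.succ) (v w.castSucc)) else 0)
        (Real.exp (s t a b))
    _ = α t.castSucc b * β t.succ a * Real.exp (s t a b) := by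
      refine congrArg₂ (· * ·) (congrArg₂ (· * ·) ?_ ?_) rfl
      · exact hfwd.symm
      · exact hbwd'.symm
end

section
/- The pairwise marginals p(t, a, b) = αᵗ(b)·βᵗ⁺¹(a)·exp(s(t,a,b))/Z of the chain CRF form, for each t, a probability distribution on K × K: all values are nonnegative and Σ_{a,b} p(t, a, b) = 1. -/
/-!
Write `w u a b = exp (s u a b)` for the weight of the transition from state `b` at time `u` to
state `a` at time `u + 1`. Unfolding the forward recursion, `α (last T) y` is the total weight of
all paths ending in `y`, so `∑ y, α (last T) y = Z`. Pairing the two recursions, the sum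
`∑ a, ∑ b, α t b · β (t+1) a · w t a b` equals both `∑ b, α t b · β t b` and
`∑ a, α (t+1) a · β (t+1) a`; hence `∑ y, α u y · β u y` does not depend on `u`, and at
`u = T` (where `β = 1`) it is `Z`.
-/

open Finset

section ForwardBackward

variable {R K : Type*} {n : ℕ}

def IsForwardRecursion [Semiring R] [Fintype K] (w : Fin n → K → K → R)
    (α : Fin (n + 1) → K → R) : Prop :=
  ∀ (u : Fin n) (a : K), α u.succ a = ∑ b : K, α u.castSucc b * w u a b

def IsBackwardRecursion [Semiring R] [Fintype K] (w : Fin n → K → K → R)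
    (β : Fin (n + 1) → K → R) : Prop :=
  ∀ (u : Fin n) (b : K), β u.castSucc b = ∑ a : K, β u.succ a * w u a b

section Nonneg

variable [Semiring R] [PartialOrder R] [IsOrderedRing R] [Fintype K]
  {w : Fin n → K → K → R} {α β : Fin (n + 1) → K → R}

theorem IsForwardRecursion.nonneg (hα : IsForwardRecursion w α) (hw : ∀ u a b, 0 ≤ w u a b)
    (h0 : ∀ a, 0 ≤ α 0 a) (u : Fin (n + 1)) (a : K) : 0 ≤ α u a := by
  induction u using Fin.induction generalizing a with
  | zero => exact h0 a
  | succ u ih =>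
    rw [hα]
    exact sum_nonneg fun b _ => mul_nonneg (ih b) (hw u a b)

theorem IsBackwardRecursion.nonneg (hβ : IsBackwardRecursion w β) (hw : ∀ u a b, 0 ≤ w u a b)
    (hlast : ∀ a, 0 ≤ β (Fin.last n) a) (u : Fin (n + 1)) (a : K) : 0 ≤ β u a := by
  induction u using Fin.reverseInduction generalizing a with
  | last => exact hlast a
  | cast u ih =>
    rw [hβ]
    exact sum_nonneg fun b _ => mul_nonneg (ih b) (hw u b a)

end Nonneg

variable [CommSemiring R] [Fintype K]
  {w : Fin n → K → K → R} {α β : Fin (n + 1) → K → R}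

theorem IsForwardRecursion.apply_last_eq_sum_paths (hα : IsForwardRecursion w α)
    (h0 : ∀ a, α 0 a = 1) (a : K) :
    α (Fin.last n) a = ∑ f : Fin n → K, ∏ u : Fin n,
      w u ((Fin.snoc f a : Fin (n + 1) → K) u.succ)
        ((Fin.snoc f a : Fin (n + 1) → K) u.castSucc) := by
  induction n generalizing a with
  | zero => simp [h0, Fin.last]
  | succ n ih =>
    have hα' : IsForwardRecursion (fun u => w u.castSucc) (fun u => α u.castSucc) :=
      fun u b => by simpa only [Fin.succ_castSucc] using hα u.castSucc b
    rw [← Fin.succ_last, hα, ← (Fin.snocEquiv fun _ => K).sum_comp, Fintype.sum_prod_type]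
    refine sum_congr rfl fun b _ => ?_
    rw [ih hα' h0 b, sum_mul]
    refine sum_congr rfl fun f _ => ?_
    rw [Fin.prod_univ_castSucc]
    simp [Fin.snocEquiv, -Fin.castSucc_succ, Fin.succ_castSucc, Fin.succ_last]

theorem IsForwardRecursion.sum_last_eq_sum_paths (hα : IsForwardRecursion w α)
    (h0 : ∀ a, α 0 a = 1) :
    ∑ a, α (Fin.last n) a =
      ∑ y : Fin (n + 1) → K, ∏ u : Fin n, w u (y u.succ) (y u.castSucc) := by
  rw [← (Fin.snocEquiv fun _ => K).sum_comp, Fintype.sum_prod_type]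
  simp [hα.apply_last_eq_sum_paths h0, Fin.snocEquiv]

theorem IsForwardRecursion.sum_sum_mul_eq (hα : IsForwardRecursion w α)
    (β : Fin (n + 1) → K → R) (u : Fin n) :
    ∑ a, ∑ b, α u.castSucc b * β u.succ a * w u a b = ∑ a, α u.succ a * β u.succ a := by
  refine sum_congr rfl fun a _ => ?_
  rw [hα, sum_mul]
  exact sum_congr rfl fun b _ => by ring

theorem IsBackwardRecursion.sum_sum_mul_eq (hβ : IsBackwardRecursion w β)
    (α : Fin (n + 1) → K → R) (u : Fin n) :
    ∑ a, ∑ b, α u.castSucc b * β u.succ a * w u a b =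
      ∑ b, α u.castSucc b * β u.castSucc b := by
  rw [sum_comm]
  refine sum_congr rfl fun b _ => ?_
  rw [hβ, mul_sum]
  exact sum_congr rfl fun a _ => by ring

theorem sum_forward_mul_backward_eq_sum_last (hα : IsForwardRecursion w α)
    (hβ : IsBackwardRecursion w β) (hlast : ∀ a, β (Fin.last n) a = 1) (u : Fin (n + 1)) :
    ∑ a, α u a * β u a = ∑ a, α (Fin.last n) a := by
  induction u using Fin.reverseInduction with
  | last => simp [hlast]
  | cast u ih => rw [← hβ.sum_sum_mul_eq α, hα.sum_sum_mul_eq β, ih]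

end ForwardBackward

theorem pairwise_marginals_form_distribution_general
    {K : Type*} [Fintype K] [Nonempty K] (T : ℕ)
    (s : Fin T → K → K → ℝ)
    (α : Fin (T + 1) → K → ℝ)
    (hα0 : ∀ y : K, α 0 y = 1)
    (hα : ∀ (u : Fin T) (y : K),
      α u.succ y = ∑ y' : K, α u.castSucc y' * Real.exp (s u y y'))
    (β : Fin (T + 1) → K → ℝ)
    (hβT : ∀ y : K, β (Fin.last T) y = 1)
    (hβ : ∀ (u : Fin T) (y' : K),
      β u.castSucc y' = ∑ y : K, β u.succ y * Real.exp (s u y y'))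
    (Z : ℝ)
    (hZ : Z = ∑ y : Fin (T + 1) → K,
        Real.exp (∑ u : Fin T, s u (y u.succ) (y u.castSucc)))
    (p : Fin T → K → K → ℝ)
    (hp : ∀ (t : Fin T) (a b : K),
      p t a b = α t.castSucc b * β t.succ a * Real.exp (s t a b) / Z) :
    ∀ t : Fin T, (∀ a b : K, 0 ≤ p t a b) ∧ (∑ a : K, ∑ b : K, p t a b) = 1 := by
  have hw : ∀ u a b, 0 ≤ Real.exp (s u a b) := fun _ _ _ => (Real.exp_pos _).le
  have hZ_pos : 0 < Z := hZ ▸ sum_pos (fun _ _ => Real.exp_pos _) univ_nonempty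
  have hZ_eq : ∑ a, α (Fin.last T) a = Z := by
    simp only [hZ, Real.exp_sum, IsForwardRecursion.sum_last_eq_sum_paths hα hα0]
  intro t
  refine ⟨fun a b => ?_, ?_⟩
  · rw [hp]
    have hα_nonneg := IsForwardRecursion.nonneg hα hw (fun a => (hα0 a).symm ▸ zero_le_one)
    have hβ_nonneg := IsBackwardRecursion.nonneg hβ hw (fun a => (hβT a).symm ▸ zero_le_one)
    exact div_nonneg (mul_nonneg (mul_nonneg (hα_nonneg _ b) (hβ_nonneg _ a)) (hw t a b))
      hZ_pos.le
  · simp only [hp, ← sum_div]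
    rw [IsForwardRecursion.sum_sum_mul_eq hα, sum_forward_mul_backward_eq_sum_last hα hβ hβT,
      hZ_eq, div_self hZ_pos.ne']

/-- For each `t`, the forward–backward pairwise marginals
`p t a b = α t b · β (t+1) a · exp(s t a b) / Z` form a probability
distribution on `K × K`: all values are nonnegative and they sum to 1. -/
theorem pairwise_marginals_form_distribution
    {K : Type*} [Fintype K] [DecidableEq K] [Nonempty K] (T : ℕ)
    (s : Fin T → K → K → ℝ)
    (α : Fin (T + 1) → K → ℝ)
    (hα0 : ∀ y : K, α 0 y = 1)
    (hα : ∀ (u : Fin T) (y : K),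
      α u.succ y = ∑ y' : K, α u.castSucc y' * Real.exp (s u y y'))
    (β : Fin (T + 1) → K → ℝ)
    (hβT : ∀ y : K, β (Fin.last T) y = 1)
    (hβ : ∀ (u : Fin T) (y' : K),
      β u.castSucc y' = ∑ y : K, β u.succ y * Real.exp (s u y y'))
    (Z : ℝ)
    (hZ : Z = ∑ y : Fin (T + 1) → K,
        Real.exp (∑ u : Fin T, s u (y u.succ) (y u.castSucc)))
    (p : Fin T → K → K → ℝ)
    (hp : ∀ (t : Fin T) (a b : K),
      p t a b = α t.castSucc b * β t.succ a * Real.exp (s t a b) / Z) :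
    ∀ t : Fin T, (∀ a b : K, 0 ≤ p t a b) ∧ (∑ a : K, ∑ b : K, p t a b) = 1 :=
  pairwise_marginals_form_distribution_general T s α hα0 hα β hβT hβ Z hZ p hp
end
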